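/- Fix Σ̂ ∈ S_+^d and ρ ≥ 0. Every Σ in the set S = {Σ ∈ S_+^d : Tr[Σ + Σ̂ - 2(Σ̂^{1/2} Σ Σ̂^{1/2})^{1/2}] ≤ ρ^2} satisfies Tr[Σ] ≤ (ρ + Tr[Σ̂]^{1/2})^2; moreover S is convex and compact. -/

import Mathlib

open Matrix
noncomputable section
open scoped Classical

/-- Positive semidefinite square root (0 if not PSD). -/
def psdSqrt {d : ℕ} (A : Matrix (Fin d) (Fin d) ℝ) : Matrix (Fin d) (Fin d) ℝ :=
  if h : A.PosSemidef then
    h.1.eigenvectorUnitary.1 * diagonal (Real.sqrt ∘ h.1.eigenvalues) *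
      (star h.1.eigenvectorUnitary : Matrix (Fin d) (Fin d) ℝ)
  else 0

/-- Frobenius norm. -/
def frob {d : ℕ} (A : Matrix (Fin d) (Fin d) ℝ) : ℝ := Real.sqrt (Aᵀ * A).trace

/-- Trace inner product. -/
def ip {d : ℕ} (A B : Matrix (Fin d) (Fin d) ℝ) : ℝ := (Aᵀ * B).trace

/-- Largest eigenvalue of a symmetric matrix (0 if not symmetric). -/
def lamMax {d : ℕ} (A : Matrix (Fin d) (Fin d) ℝ) : ℝ :=
  if h : A.IsHermitian then ⨆ i, h.eigenvalues i else 0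

/-- Smallest eigenvalue of a symmetric matrix (0 if not symmetric). -/
def lamMin {d : ℕ} (A : Matrix (Fin d) (Fin d) ℝ) : ℝ :=
  if h : A.IsHermitian then ⨅ i, h.eigenvalues i else 0

/-- Gelbrich distance between two mean–covariance pairs. -/
def gelbrich {d : ℕ} (μ₁ μ₂ : EuclideanSpace ℝ (Fin d))
    (S₁ S₂ : Matrix (Fin d) (Fin d) ℝ) : ℝ :=
  Real.sqrt (‖μ₁ - μ₂‖ ^ 2 + (S₁ + S₂ - 2 • psdSqrt (psdSqrt S₂ * S₁ * psdSqrt S₂)).trace)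

/-!
Everything rests on the variational formula, for `B, S ⪰ 0` and `C = (B^{1/2} S B^{1/2})^{1/2}`,
`2 Tr C = inf_{Z ≻ 0} (Tr[Z S] + Tr[Z⁻¹ B])`.
The lower bound is Young's inequality `2 Tr[Xᴴ V] ≤ Tr[Xᴴ Z X] + Tr[Vᴴ Z⁻¹ V]` for a suitable
pair `X, V` built from the pseudo-inverse of `C`; the infimum is approached by regularisations of
the minimiser `B^{1/2} C⁻¹ B^{1/2}`. So the Gelbrich ball is the positive semidefinite cone cut by
the closed half-spaces `Tr S + Tr B - ρ² ≤ Tr[Z S] + Tr[Z⁻¹ B]`, hence closed and convex, and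
`Z = t • 1` gives `Tr S + Tr B - ρ² ≤ 2 √(Tr S · Tr B)`, which is the trace bound. A trace bound
bounds every entry of a positive semidefinite matrix, so the ball is compact.
-/

open Filter Topology
open scoped MatrixOrder

lemma le_of_forall_pos_le_of_continuous {c : ℝ} {f : ℝ → ℝ} (hf : Continuous f)
    (h : ∀ ε > 0, c ≤ f ε) : c ≤ f 0 :=
  ge_of_tendsto ((hf.tendsto 0).mono_left nhdsWithin_le_nhds)
    (eventually_nhdsWithin_of_forall (s := Set.Ioi 0) h)

lemma le_two_mul_mul_of_forall_le {c u v : ℝ} (hu : 0 ≤ u) (hv : 0 ≤ v)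
    (h : ∀ t > 0, c ≤ t * u ^ 2 + t⁻¹ * v ^ 2) : c ≤ 2 * u * v := by
  suffices ∀ ε > 0, c ≤ 2 * u * v + ε * (u + v) by
    simpa using le_of_forall_pos_le_of_continuous (by fun_prop) this
  intro ε hε
  -- `t = (v + ε) / (u + ε)` nearly balances the two terms
  have h1 : (v + ε) / (u + ε) * u ^ 2 ≤ (v + ε) * u := by
    rw [div_mul_eq_mul_div, div_le_iff₀ (by positivity)]
    nlinarith [mul_nonneg (mul_nonneg (add_nonneg hv hε.le) hu) hε.le]
  have h2 : ((v + ε) / (u + ε))⁻¹ * v ^ 2 ≤ (u + ε) * v := by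
    rw [inv_div, div_mul_eq_mul_div, div_le_iff₀ (by positivity)]
    nlinarith [mul_nonneg (mul_nonneg (add_nonneg hu hε.le) hv) hε.le]
  linarith [h ((v + ε) / (u + ε)) (by positivity)]

namespace Matrix

section PosSemidefCone

variable {n : Type*}

lemma convex_setOf_posSemidef [Finite n] : Convex ℝ {S : Matrix n n ℝ | S.PosSemidef} :=
  fun _ hS _ hT _ _ ha hb _ => (hS.smul ha).add (hT.smul hb)

lemma posDef_add_smul_one [DecidableEq n] {M : Matrix n n ℝ} (hM : 0 ≤ M) {ε : ℝ} (hε : 0 < ε) :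
    (M + ε • 1).PosDef :=
  PosDef.posSemidef_add hM.posSemidef (PosDef.one.smul hε)

variable [Fintype n]

lemma trace_mono {A A' : Matrix n n ℝ} (h : A ≤ A') : A.trace ≤ A'.trace := by
  have := (le_iff.mp h).trace_nonneg
  rwa [trace_sub, sub_nonneg] at this

lemma trace_conjTranspose_mul_comm (X V : Matrix n n ℝ) : (Vᴴ * X).trace = (Xᴴ * V).trace := by
  rw [← trace_transpose, transpose_mul, conjTranspose_eq_transpose_of_trivial,
    conjTranspose_eq_transpose_of_trivial, transpose_transpose]

lemma isClosed_setOf_posSemidef : IsClosed {S : Matrix n n ℝ | S.PosSemidef} := by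
  simp_rw [posSemidef_iff_dotProduct_mulVec, Set.ofPred_and, Set.ofPred_forall]
  exact (isClosed_eq continuous_id.matrix_conjTranspose continuous_id).inter <|
    isClosed_iInter fun x => isClosed_le continuous_const <|
      continuous_const.dotProduct (continuous_id.matrix_mulVec continuous_const)

lemma convex_setOf_trace_add_le (Z : Matrix n n ℝ) (a b : ℝ) :
    Convex ℝ {S : Matrix n n ℝ | S.trace + a ≤ (Z * S).trace + b} := by
  have hlin : IsLinearMap ℝ fun S : Matrix n n ℝ => (Z * S).trace - S.trace :=
    ⟨fun S T => by simp only [mul_add, trace_add]; ring,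
      fun c S => by simp only [mul_smul_comm, trace_smul, smul_eq_mul]; ring⟩
  have hset : {S : Matrix n n ℝ | S.trace + a ≤ (Z * S).trace + b}
      = {S | a - b ≤ (Z * S).trace - S.trace} := by
    ext S
    simp only [Set.mem_ofPred_eq]
    constructor <;> intro h <;> linarith
  rw [hset]
  exact convex_halfSpace_ge hlin (a - b)

lemma isClosed_setOf_trace_add_le (Z : Matrix n n ℝ) (a b : ℝ) :
    IsClosed {S : Matrix n n ℝ | S.trace + a ≤ (Z * S).trace + b} :=
  isClosed_le (continuous_id.matrix_trace.add continuous_const)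
    ((continuous_const.matrix_mul continuous_id).matrix_trace.add continuous_const)

lemma abs_apply_le_trace [DecidableEq n] {S : Matrix n n ℝ} (hS : S.PosSemidef) (i j : n) :
    |S i j| ≤ S.trace := by
  have hform (s : ℝ) : 0 ≤ S i i + s * S j i + s * (S i j + s * S j j) := by
    have := hS.dotProduct_mulVec_nonneg (Pi.single i 1 + Pi.single j s)
    simpa [add_dotProduct, dotProduct_add, mulVec_add, mulVec_single, single_dotProduct] using this
  have hsym : S j i = S i j := by simpa using hS.isHermitian.apply i j
  have hdiag (k : n) : S k k ≤ S.trace :=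
    Finset.single_le_sum (f := fun k => S k k) (fun k _ => hS.diag_nonneg) (Finset.mem_univ k)
  have hplus := hform 1
  have hminus := hform (-1)
  rw [hsym] at hplus hminus
  rw [abs_le]
  constructor <;> linarith [hdiag i, hdiag j]

lemma isCompact_of_forall_posSemidef_trace_le {K : Set (Matrix n n ℝ)} (hK : IsClosed K) (R : ℝ)
    (h : ∀ S ∈ K, S.PosSemidef ∧ S.trace ≤ R) : IsCompact K := by
  classical
  refine IsCompact.of_isClosed_subset (isCompact_univ_pi fun _ => isCompact_univ_pi fun _ =>
    isCompact_Icc (a := -R) (b := R)) hK fun S hS => ?_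
  have hb := abs_apply_le_trace (h S hS).1
  exact Set.mem_univ_pi.mpr fun i => Set.mem_univ_pi.mpr fun j =>
    abs_le.mp ((hb i j).trans (h S hS).2)

end PosSemidefCone

section FunctionalCalculus

variable {n : Type*} [Fintype n] [DecidableEq n]

lemma trace_mul_nonneg {A B : Matrix n n ℝ} (hA : 0 ≤ A) (hB : 0 ≤ B) : 0 ≤ (A * B).trace := by
  have hsq : (CFC.sqrt A * B * CFC.sqrt A).trace = (A * B).trace := by
    rw [trace_mul_cycle, CFC.sqrt_mul_sqrt_self A]
  rw [← hsq]
  exact ((CFC.sqrt_nonneg A).isSelfAdjoint.conjugate_nonneg hB).posSemidef.trace_nonneg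

lemma trace_mul_le_trace_mul {A A' B : Matrix n n ℝ} (h : A ≤ A') (hB : 0 ≤ B) :
    (A * B).trace ≤ (A' * B).trace := by
  have := trace_mul_nonneg (sub_nonneg.mpr h) hB
  rwa [sub_mul, trace_sub, sub_nonneg] at this

lemma trace_mul_le_trace {A B : Matrix n n ℝ} (hA : 0 ≤ A) (hB : B ≤ 1) :
    (A * B).trace ≤ A.trace := by
  simpa [trace_mul_comm A] using trace_mul_le_trace_mul hB hA

lemma two_mul_trace_conjTranspose_mul_le {Z : Matrix n n ℝ} (hZ : Z.PosDef) (X V : Matrix n n ℝ) :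
    2 * (Xᴴ * V).trace ≤ (Xᴴ * Z * X).trace + (Vᴴ * Z⁻¹ * V).trace := by
  have hdet := (isUnit_iff_isUnit_det Z).mp hZ.isUnit
  have h := (hZ.inv.posSemidef.conjTranspose_mul_mul_same (Z * X - V)).trace_nonneg
  simp only [conjTranspose_sub, conjTranspose_mul, hZ.isHermitian.eq, sub_mul, mul_sub,
    trace_sub, mul_assoc, mul_nonsing_inv Z hdet, mul_one] at h
  simp only [← mul_assoc, nonsing_inv_mul Z hdet, one_mul, trace_conjTranspose_mul_comm X V] at h
  linarith

lemma continuousOn_spectrum (M : Matrix n n ℝ) (f : ℝ → ℝ) : ContinuousOn f (spectrum ℝ M) :=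
  M.finite_spectrum.continuousOn f

lemma cfc_mul_cfc (f g : ℝ → ℝ) (M : Matrix n n ℝ) :
    cfc f M * cfc g M = cfc (fun x => f x * g x) M :=
  (cfc_mul f g M (continuousOn_spectrum _ _) (continuousOn_spectrum _ _)).symm

lemma mul_self_eq_cfc {M : Matrix n n ℝ} (hM : IsSelfAdjoint M) :
    M * M = cfc (fun x : ℝ => x * x) M := by
  rw [← cfc_mul_cfc _ _ M, cfc_id' ℝ M hM]

lemma mul_cfc_inv_le_one {M : Matrix n n ℝ} (hM : IsSelfAdjoint M) :
    M * cfc (·⁻¹ : ℝ → ℝ) M ≤ 1 := by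
  nth_rw 1 [← cfc_id' ℝ M hM]
  rw [cfc_mul_cfc _ _ M]
  refine cfc_le_one _ M fun x _ => ?_
  rcases eq_or_ne x 0 with rfl | hx <;> simp [*]

lemma cfc_inv_mul_mul_self {M : Matrix n n ℝ} (hM : IsSelfAdjoint M) :
    cfc (·⁻¹ : ℝ → ℝ) M * (M * M) = M := by
  rw [mul_self_eq_cfc hM, cfc_mul_cfc _ _ M]
  conv_rhs => rw [← cfc_id' ℝ M hM]
  refine cfc_congr fun x _ => ?_
  rcases eq_or_ne x 0 with rfl | hx
  · simp
  · field_simp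

lemma add_smul_one_eq_cfc {M : Matrix n n ℝ} (hM : IsSelfAdjoint M) (ε : ℝ) :
    M + ε • 1 = cfc (· + ε) M := by
  rw [cfc_add_const ε (fun x => x) M (continuousOn_spectrum _ _) hM, cfc_id' ℝ M hM,
    Algebra.algebraMap_eq_smul_one]

lemma inv_add_smul_one_eq_cfc {M : Matrix n n ℝ} (hM : 0 ≤ M) {ε : ℝ} (hε : 0 < ε) :
    (M + ε • 1)⁻¹ = cfc (fun x => (x + ε)⁻¹) M := by
  refine inv_eq_left_inv ?_
  rw [add_smul_one_eq_cfc hM.isSelfAdjoint, cfc_mul_cfc _ _ M, ← cfc_const_one ℝ M]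
  refine cfc_congr fun x hx => ?_
  have := spectrum_nonneg_of_nonneg hM hx
  field_simp

section Resolvent

variable {M : Matrix n n ℝ} {ε : ℝ}

lemma inv_add_smul_one_le (hM : 0 ≤ M) (hε : 0 < ε) : (M + ε • 1)⁻¹ ≤ ε⁻¹ • 1 := by
  rw [inv_add_smul_one_eq_cfc hM hε, ← Algebra.algebraMap_eq_smul_one]
  refine cfc_le_algebraMap _ _ M (fun x hx => ?_) (continuousOn_spectrum _ _)
  have := spectrum_nonneg_of_nonneg hM hx
  exact inv_anti₀ hε (by linarith)

lemma inv_add_smul_one_mul_mul_self_le (hM : 0 ≤ M) (hε : 0 < ε) :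
    (M + ε • 1)⁻¹ * (M * M) ≤ M := by
  rw [inv_add_smul_one_eq_cfc hM hε, mul_self_eq_cfc hM.isSelfAdjoint, cfc_mul_cfc _ _ M]
  conv_rhs => rw [← cfc_id' ℝ M hM.isSelfAdjoint]
  refine cfc_mono (fun x hx => ?_) (continuousOn_spectrum _ _) (continuousOn_spectrum _ _)
  have := spectrum_nonneg_of_nonneg hM hx
  rw [← div_eq_inv_mul, div_le_iff₀ (by linarith)]
  nlinarith

lemma inv_add_smul_one_mul_mul_self_mul_inv_le_one (hM : 0 ≤ M) (hε : 0 < ε) :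
    (M + ε • 1)⁻¹ * (M * M) * (M + ε • 1)⁻¹ ≤ 1 := by
  rw [inv_add_smul_one_eq_cfc hM hε, mul_self_eq_cfc hM.isSelfAdjoint,
    cfc_mul_cfc _ _ M, cfc_mul_cfc _ _ M]
  refine cfc_le_one _ M fun x hx => ?_
  have := spectrum_nonneg_of_nonneg hM hx
  rw [show (x + ε)⁻¹ * (x * x) * (x + ε)⁻¹ = (x / (x + ε)) ^ 2 by ring]
  exact pow_le_one₀ (by positivity) ((div_le_one (by linarith)).mpr (by linarith))

end Resolvent

theorem two_mul_trace_sqrt_le {B S Z : Matrix n n ℝ} (hB : 0 ≤ B) (hS : 0 ≤ S) (hZ : Z.PosDef) :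
    2 * (CFC.sqrt (CFC.sqrt B * S * CFC.sqrt B)).trace ≤ (Z * S).trace + (Z⁻¹ * B).trace := by
  set P := CFC.sqrt B
  set T := CFC.sqrt S
  set C := CFC.sqrt (P * S * P)
  set C' := cfc (·⁻¹ : ℝ → ℝ) C
  have hP : IsSelfAdjoint P := (CFC.sqrt_nonneg B).isSelfAdjoint
  have hC : IsSelfAdjoint C := (CFC.sqrt_nonneg _).isSelfAdjoint
  have hPh : Pᴴ = P := hP
  have hTh : Tᴴ = T := (CFC.sqrt_nonneg S).isSelfAdjoint
  have hC'h : C'ᴴ = C' := (cfc_predicate _ C : IsSelfAdjoint C')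
  have hPP : P * P = B := CFC.sqrt_mul_sqrt_self B hB
  have hTT : T * T = S := CFC.sqrt_mul_sqrt_self S hS
  have hCC : C * C = P * S * P := CFC.sqrt_mul_sqrt_self _ (hP.conjugate_nonneg hS)
  have hPZP : 0 ≤ P * Z⁻¹ * P := hP.conjugate_nonneg hZ.inv.posSemidef.nonneg
  -- Young's inequality with `X = T`, `V = P * U`, where `U = C' * P * T` has `U * Uᴴ = C * C' ≤ 1`
  -- because `C'` is the pseudo-inverse of `C` (`0⁻¹ = 0` in `ℝ`)
  have h := two_mul_trace_conjTranspose_mul_le hZ T (P * C' * P * T)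
  have h1 : (Tᴴ * (P * C' * P * T)).trace = C.trace := calc
    _ = (P * (C' * P * S)).trace := by
      rw [hTh, trace_mul_comm, ← hTT]; simp only [mul_assoc]
    _ = (C' * (C * C)).trace := by
      rw [trace_mul_comm, hCC]; simp only [mul_assoc]
    _ = C.trace := by rw [cfc_inv_mul_mul_self hC]
  have h2 : (Tᴴ * Z * T).trace = (Z * S).trace := by
    rw [hTh, trace_mul_comm, ← mul_assoc, hTT, trace_mul_comm]
  have h3 : ((P * C' * P * T)ᴴ * Z⁻¹ * (P * C' * P * T)).trace ≤ (Z⁻¹ * B).trace := calc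
    _ = (P * C' * P * S * P * C' * (P * Z⁻¹)).trace := by
      simp only [conjTranspose_mul, hTh, hPh, hC'h]
      rw [trace_mul_comm, ← hTT]; simp only [mul_assoc]
    _ = (P * Z⁻¹ * P * (C' * (C * C) * C')).trace := by
      rw [trace_mul_comm, hCC]; simp only [mul_assoc]
    _ = (P * Z⁻¹ * P * (C * C')).trace := by rw [cfc_inv_mul_mul_self hC]
    _ ≤ (P * Z⁻¹ * P).trace := trace_mul_le_trace hPZP (mul_cfc_inv_le_one hC)
    _ = (Z⁻¹ * B).trace := by rw [trace_mul_comm, ← mul_assoc, hPP, trace_mul_comm]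
  linarith

lemma conj_add_smul_one_le {P S : Matrix n n ℝ} (hP : IsSelfAdjoint P) (hS : 0 ≤ S) {θ : ℝ}
    (hθ : 0 ≤ θ) :
    (P + θ ^ 2 • 1) * S * (P + θ ^ 2 • 1) ≤ (1 + θ) • (P * S * P) + (θ ^ 3 + θ ^ 4) • S := by
  have hdiff : (1 + θ) • (P * S * P) + (θ ^ 3 + θ ^ 4) • S - (P + θ ^ 2 • 1) * S * (P + θ ^ 2 • 1)
      = θ • ((P - θ • 1) * S * (P - θ • 1)) := by
    simp only [add_mul, mul_add, sub_mul, mul_sub, smul_mul_assoc, mul_smul_comm, one_mul,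
      mul_one, smul_smul, smul_add, smul_sub]
    module
  have hPθ : IsSelfAdjoint (P - θ • 1) := hP.sub ((IsSelfAdjoint.all θ).smul (.one _))
  rw [← sub_nonneg, hdiff]
  exact ((hPθ.conjugate_nonneg hS).posSemidef.smul hθ).nonneg

lemma trace_conj_inv_add_smul_one_mul_le {P S C : Matrix n n ℝ} (hP : IsSelfAdjoint P) (hS : 0 ≤ S)
    (hC : 0 ≤ C) (hCC : C * C = P * S * P) {θ : ℝ} (hθ : 0 < θ) :
    ((P + θ ^ 2 • 1) * (C + θ • 1)⁻¹ * (P + θ ^ 2 • 1) * S).trace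
      ≤ (1 + θ) * C.trace + (θ ^ 2 + θ ^ 3) * S.trace := by
  set D := (C + θ • 1)⁻¹
  have hD : 0 ≤ D := (posDef_add_smul_one hC hθ).inv.posSemidef.nonneg
  have hDCC : (D * (C * C)).trace ≤ C.trace := trace_mono (inv_add_smul_one_mul_mul_self_le hC hθ)
  have hDS : (D * S).trace ≤ θ⁻¹ * S.trace := by
    simpa [smul_mul_assoc, trace_smul] using trace_mul_le_trace_mul (inv_add_smul_one_le hC hθ) hS
  calc ((P + θ ^ 2 • 1) * D * (P + θ ^ 2 • 1) * S).trace
      = ((P + θ ^ 2 • 1) * S * (P + θ ^ 2 • 1) * D).trace := by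
        rw [mul_assoc _ (P + θ ^ 2 • 1) S, trace_mul_cycle, mul_assoc]
    _ ≤ (((1 + θ) • (P * S * P) + (θ ^ 3 + θ ^ 4) • S) * D).trace :=
        trace_mul_le_trace_mul (conj_add_smul_one_le hP hS hθ.le) hD
    _ = (1 + θ) * (D * (C * C)).trace + (θ ^ 3 + θ ^ 4) * (D * S).trace := by
        rw [add_mul, trace_add, smul_mul_assoc, smul_mul_assoc, trace_smul, trace_smul, ← hCC,
          trace_mul_comm _ D, trace_mul_comm S D, smul_eq_mul, smul_eq_mul]
    _ ≤ (1 + θ) * C.trace + (θ ^ 3 + θ ^ 4) * (θ⁻¹ * S.trace) := by gcongr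
    _ = (1 + θ) * C.trace + (θ ^ 2 + θ ^ 3) * S.trace := by field_simp

lemma trace_inv_conj_inv_add_smul_one_mul_le {P C : Matrix n n ℝ} (hP : 0 ≤ P) (hC : 0 ≤ C)
    {θ : ℝ} (hθ : 0 < θ) :
    (((P + θ ^ 2 • 1) * (C + θ • 1)⁻¹ * (P + θ ^ 2 • 1))⁻¹ * (P * P)).trace
      ≤ C.trace + θ * Fintype.card n := by
  have hCθ := posDef_add_smul_one hC hθ
  set Pθ := P + θ ^ 2 • 1
  calc ((Pθ * (C + θ • 1)⁻¹ * Pθ)⁻¹ * (P * P)).trace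
      = ((C + θ • 1) * (Pθ⁻¹ * (P * P) * Pθ⁻¹)).trace := by
        rw [mul_inv_rev, mul_inv_rev,
          nonsing_inv_nonsing_inv _ ((isUnit_iff_isUnit_det _).mp hCθ.isUnit), mul_assoc,
          trace_mul_comm]
        simp only [mul_assoc]
    _ ≤ (C + θ • 1).trace :=
        trace_mul_le_trace hCθ.posSemidef.nonneg
          (inv_add_smul_one_mul_mul_self_mul_inv_le_one hP (by positivity))
    _ = C.trace + θ * Fintype.card n := by simp [trace_add, trace_smul]

theorem exists_posDef_trace_mul_add_trace_inv_mul_le {B S : Matrix n n ℝ} (hB : 0 ≤ B)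
    (hS : 0 ≤ S) {θ : ℝ} (hθ : 0 < θ) :
    ∃ Z : Matrix n n ℝ, Z.PosDef ∧ (Z * S).trace + (Z⁻¹ * B).trace ≤
      2 * (CFC.sqrt (CFC.sqrt B * S * CFC.sqrt B)).trace
        + θ * ((CFC.sqrt (CFC.sqrt B * S * CFC.sqrt B)).trace + Fintype.card n)
        + (θ ^ 2 + θ ^ 3) * S.trace := by
  set P := CFC.sqrt B
  set C := CFC.sqrt (P * S * P)
  have hP : 0 ≤ P := CFC.sqrt_nonneg B
  have hC : 0 ≤ C := CFC.sqrt_nonneg _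
  have hCC : C * C = P * S * P :=
    CFC.sqrt_mul_sqrt_self _ (hP.isSelfAdjoint.conjugate_nonneg hS)
  have hPθ := posDef_add_smul_one hP (pow_pos hθ 2)
  -- a regularisation of the minimiser `P * C⁻¹ * P`
  refine ⟨(P + θ ^ 2 • 1) * (C + θ • 1)⁻¹ * (P + θ ^ 2 • 1), ?_, ?_⟩
  · have := (posDef_add_smul_one hC hθ).inv.conjTranspose_mul_mul_same
      (mulVec_injective_iff_isUnit.mpr hPθ.isUnit)
    rwa [hPθ.isHermitian.eq] at this
  · have h1 := trace_conj_inv_add_smul_one_mul_le hP.isSelfAdjoint hS hC hCC hθ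
    have h2 := trace_inv_conj_inv_add_smul_one_mul_le hP hC hθ
    rw [CFC.sqrt_mul_sqrt_self B hB] at h2
    linarith

theorem isGLB_trace_mul_add_trace_inv_mul {B S : Matrix n n ℝ} (hB : 0 ≤ B) (hS : 0 ≤ S) :
    IsGLB ((fun Z => (Z * S).trace + (Z⁻¹ * B).trace) '' {Z | Z.PosDef})
      (2 * (CFC.sqrt (CFC.sqrt B * S * CFC.sqrt B)).trace) := by
  refine ⟨?_, fun c hc => ?_⟩
  · rintro _ ⟨Z, hZ, rfl⟩
    exact two_mul_trace_sqrt_le hB hS hZ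
  · simpa using le_of_forall_pos_le_of_continuous (by fun_prop) fun θ hθ =>
      let ⟨Z, hZ, hle⟩ := exists_posDef_trace_mul_add_trace_inv_mul_le hB hS hθ
      (hc ⟨Z, hZ, rfl⟩).trans hle

end FunctionalCalculus

end Matrix

section Gelbrich

variable {d : ℕ}

lemma psdSqrt_eq_sqrt {A : Matrix (Fin d) (Fin d) ℝ} (hA : A.PosSemidef) :
    psdSqrt A = CFC.sqrt A := by
  rw [psdSqrt, dif_pos hA, CFC.sqrt_eq_real_sqrt A hA.nonneg, cfcₙ_eq_cfc, hA.1.cfc_eq,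
    IsHermitian.cfc, Unitary.conjStarAlgAut_apply]
  rfl

def gelbrichBall (B : Matrix (Fin d) (Fin d) ℝ) (ρ : ℝ) : Set (Matrix (Fin d) (Fin d) ℝ) :=
  {S | S.PosSemidef ∧ (S + B - 2 • psdSqrt (psdSqrt B * S * psdSqrt B)).trace ≤ ρ ^ 2}

variable {B : Matrix (Fin d) (Fin d) ℝ} {ρ : ℝ}

theorem gelbrichBall_eq (hB : B.PosSemidef) :
    gelbrichBall B ρ = {S | S.PosSemidef} ∩ ⋂ Z ∈ {Z : Matrix (Fin d) (Fin d) ℝ | Z.PosDef},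
      {S | S.trace + (B.trace - ρ ^ 2) ≤ (Z * S).trace + (Z⁻¹ * B).trace} := by
  ext S
  simp only [gelbrichBall, Set.mem_ofPred_eq, Set.mem_inter_iff, Set.mem_iInter]
  refine and_congr_right fun hS => ?_
  have hPSP : (CFC.sqrt B * S * CFC.sqrt B).PosSemidef :=
    ((CFC.sqrt_nonneg B).isSelfAdjoint.conjugate_nonneg hS.nonneg).posSemidef
  rw [psdSqrt_eq_sqrt hB, psdSqrt_eq_sqrt hPSP, trace_sub, trace_add, trace_smul, nsmul_eq_mul,
    Nat.cast_ofNat, sub_le_comm, add_sub_assoc,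
    le_isGLB_iff (isGLB_trace_mul_add_trace_inv_mul hB.nonneg hS.nonneg), mem_lowerBounds,
    Set.forall_mem_image]
  rfl

theorem trace_le_of_mem_gelbrichBall (hB : B.PosSemidef) (hρ : 0 ≤ ρ) {S : Matrix (Fin d) (Fin d) ℝ}
    (hS : S ∈ gelbrichBall B ρ) : S.trace ≤ (ρ + √B.trace) ^ 2 := by
  rw [gelbrichBall_eq hB] at hS
  obtain ⟨hS, hZ⟩ := hS
  have hSt := hS.trace_nonneg
  have hBt := hB.trace_nonneg
  have hscalar (t : ℝ) (ht : 0 < t) :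
      S.trace + (B.trace - ρ ^ 2) ≤ t * √S.trace ^ 2 + t⁻¹ * √B.trace ^ 2 := by
    have hinv : (t • 1 : Matrix (Fin d) (Fin d) ℝ)⁻¹ = t⁻¹ • 1 :=
      inv_eq_left_inv (by rw [smul_mul_smul, one_mul, inv_mul_cancel₀ ht.ne', one_smul])
    have := Set.mem_iInter₂.mp hZ (t • 1) (PosDef.one.smul ht)
    simpa [hinv, trace_smul, Real.sq_sqrt hSt, Real.sq_sqrt hBt] using this
  have h := le_two_mul_mul_of_forall_le (Real.sqrt_nonneg _) (Real.sqrt_nonneg _) hscalar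
  have hle : √S.trace ≤ ρ + √B.trace := by
    nlinarith [Real.sq_sqrt hSt, Real.sq_sqrt hBt, Real.sqrt_nonneg S.trace,
      Real.sqrt_nonneg B.trace]
  calc S.trace = √S.trace ^ 2 := (Real.sq_sqrt hSt).symm
    _ ≤ (ρ + √B.trace) ^ 2 := pow_le_pow_left₀ (Real.sqrt_nonneg _) hle 2

theorem convex_gelbrichBall (hB : B.PosSemidef) : Convex ℝ (gelbrichBall B ρ) := by
  rw [gelbrichBall_eq hB]
  exact convex_setOf_posSemidef.inter (convex_iInter₂ fun Z _ => convex_setOf_trace_add_le Z _ _)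

theorem isClosed_gelbrichBall (hB : B.PosSemidef) : IsClosed (gelbrichBall B ρ) := by
  rw [gelbrichBall_eq hB]
  exact isClosed_setOf_posSemidef.inter
    (isClosed_biInter fun Z _ => isClosed_setOf_trace_add_le Z _ _)

theorem isCompact_gelbrichBall (hB : B.PosSemidef) (hρ : 0 ≤ ρ) : IsCompact (gelbrichBall B ρ) :=
  isCompact_of_forall_posSemidef_trace_le (isClosed_gelbrichBall hB) _
    fun _ hS => ⟨hS.1, trace_le_of_mem_gelbrichBall hB hρ hS⟩

end Gelbrich

/-- The Gelbrich ball of covariance matrices is trace-bounded,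
convex and compact. -/
theorem gelbrich_ball_compact {d : ℕ} (Shat : Matrix (Fin d) (Fin d) ℝ)
    (hShat : Shat.PosSemidef) (ρ : ℝ) (hρ : 0 ≤ ρ) :
    (∀ S ∈ {S : Matrix (Fin d) (Fin d) ℝ | S.PosSemidef ∧
        (S + Shat - 2 • psdSqrt (psdSqrt Shat * S * psdSqrt Shat)).trace ≤ ρ ^ 2},
      S.trace ≤ (ρ + Real.sqrt Shat.trace) ^ 2) ∧
    Convex ℝ {S : Matrix (Fin d) (Fin d) ℝ | S.PosSemidef ∧
        (S + Shat - 2 • psdSqrt (psdSqrt Shat * S * psdSqrt Shat)).trace ≤ ρ ^ 2} ∧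
    IsCompact {S : Matrix (Fin d) (Fin d) ℝ | S.PosSemidef ∧
        (S + Shat - 2 • psdSqrt (psdSqrt Shat * S * psdSqrt Shat)).trace ≤ ρ ^ 2} :=
  ⟨fun _ hS => trace_le_of_mem_gelbrichBall hShat hρ hS, convex_gelbrichBall hShat,
    isCompact_gelbrichBall hShat hρ⟩
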